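/- arXiv:2502.21071 — 2 statements merged into one kernel-verified Lean document; each statement's English description precedes it below -/
import Mathlib

section
/- Let (X, μ) be a σ-finite measure space, 1 < p < ∞ with conjugate p'. There is a constant C_p > 0 (depending only on p) such that for every measurable f : X → ℂ, sup{μ(E)^{−1/p'} ∫_E |f| dμ : E measurable, 0 < μ(E) < ∞} ≤ C_p · sup_{y>0} y · μ{x : |f(x)| > y}^{1/p}, and conversely sup_{y>0} y · μ{x : |f(x)| > y}^{1/p} ≤ sup{μ(E)^{−1/p'} ∫_E |f| dμ : E measurable, 0 < μ(E) < ∞}. -/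
/-!
Write `A` for the quasinorm `sup_y y μ{|f| > y}^{1/p}`, so that `μ{|f| > t} ≤ (A / t)^p`.
Splitting the layer-cake integral of `|f|` over `E` at a level `t₀` gives
`∫_E |f| ≤ μ(E) t₀ + A^p t₀^{1-p} / (p - 1)`, and the choice `t₀ = A μ(E)^{-1/p}` balances the
two terms into `p / (p - 1) · A μ(E)^{1/p'}`.
Conversely, on a set `E ⊆ {|f| > y}` of finite measure `∫_E |f| ≥ y μ(E)`, which reads
`y μ(E)^{1/p} ≤ μ(E)^{-1/p'} ∫_E |f|`; σ-finiteness exhausts `{|f| > y}` by such sets.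
-/

open MeasureTheory Set Filter Topology
open scoped ENNReal

section

variable {X : Type*} [MeasurableSpace X] {μ : Measure X}

noncomputable def weakLpQuasinorm (μ : Measure X) (p : ℝ) (g : X → ℝ) : ℝ≥0∞ :=
  ⨆ (y : ℝ) (_ : 0 < y), ENNReal.ofReal y * μ {x | y < g x} ^ (1/p)

noncomputable def weakLpAverageNorm (μ : Measure X) (p' : ℝ) (g : X → ℝ) : ℝ≥0∞ :=
  ⨆ (E : Set X) (_ : MeasurableSet E ∧ 0 < μ E ∧ μ E < ⊤),
    μ E ^ (-(1/p')) * ∫⁻ x in E, ENNReal.ofReal (g x) ∂μ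

lemma lintegral_Ioi_ofReal_rpow_neg {p t₀ : ℝ} (hp : 1 < p) (ht₀ : 0 < t₀) :
    ∫⁻ t in Ioi t₀, ENNReal.ofReal (t ^ (-p)) = ENNReal.ofReal (t₀ ^ (1 - p) / (p - 1)) := by
  have hnonneg : 0 ≤ᵐ[volume.restrict (Ioi t₀)] fun t : ℝ => t ^ (-p) :=
    (ae_restrict_iff' measurableSet_Ioi).2 <|
      ae_of_all _ fun t ht => Real.rpow_nonneg (ht₀.trans ht).le _
  rw [← ofReal_integral_eq_lintegral_ofReal
      (integrableOn_Ioi_rpow_of_lt (by linarith) ht₀) hnonneg,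
    integral_Ioi_rpow_of_lt (by linarith) ht₀, neg_add_eq_sub, ← neg_sub p 1, div_neg, neg_div,
    neg_neg]

lemma split_bound_at_optimal_level {p a m : ℝ} (hp : 1 < p) (ha : 0 < a) (hm : 0 < m) :
    m * (a * m ^ (-(1/p))) + a ^ p * ((a * m ^ (-(1/p))) ^ (1 - p) / (p - 1)) =
      p / (p - 1) * a * m ^ (1 - 1/p) := by
  have hp0 : p ≠ 0 := by positivity
  have hp1 : p - 1 ≠ 0 := by linarith
  have hfirst : m * m ^ (-(1/p)) = m ^ (1 - 1/p) := by
    rw [sub_eq_add_neg, Real.rpow_add hm, Real.rpow_one]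
  have hsecond : (a * m ^ (-(1/p))) ^ (1 - p) = a ^ (1 - p) * m ^ (1 - 1/p) := by
    rw [Real.mul_rpow ha.le (Real.rpow_nonneg hm.le _), ← Real.rpow_mul hm.le]
    congr 2
    field_simp
    ring
  have hpow : a ^ p * a ^ (1 - p) = a := by
    rw [← Real.rpow_add ha, add_sub_cancel, Real.rpow_one]
  rw [hsecond, mul_left_comm, hfirst, ← mul_div_assoc, ← mul_assoc, hpow]
  field_simp
  ring

lemma ENNReal.le_mul_of_forall_le_ofReal {L A c : ℝ≥0∞} (hc0 : c ≠ 0) (hc : c ≠ ⊤)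
    (h : ∀ a : ℝ, 0 < a → A ≤ ENNReal.ofReal a → L ≤ c * ENNReal.ofReal a) : L ≤ c * A := by
  rcases eq_or_ne A ⊤ with rfl | hA
  · rw [ENNReal.mul_top hc0]
    exact le_top
  have hlim : Tendsto (fun a => c * ENNReal.ofReal a) (𝓝[>] A.toReal)
      (𝓝 (c * ENNReal.ofReal A.toReal)) :=
    ENNReal.Tendsto.const_mul
      ((ENNReal.continuous_ofReal.tendsto _).mono_left nhdsWithin_le_nhds) (Or.inr hc)
  rw [ENNReal.ofReal_toReal hA] at hlim
  refine ge_of_tendsto hlim ?_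
  filter_upwards [self_mem_nhdsWithin] with a (ha : A.toReal < a)
  refine h a (ENNReal.toReal_nonneg.trans_lt ha) ?_
  rw [← ENNReal.ofReal_toReal hA]
  exact ENNReal.ofReal_le_ofReal ha.le

lemma measure_lt_le_of_weakLpQuasinorm_le {p a t : ℝ} {g : X → ℝ} (hp : 0 < p) (ha : 0 ≤ a)
    (ht : 0 < t) (h : weakLpQuasinorm μ p g ≤ ENNReal.ofReal a) :
    μ {x | t < g x} ≤ ENNReal.ofReal (a ^ p * t ^ (-p)) := by
  have hlevel : ENNReal.ofReal t * μ {x | t < g x} ^ (1/p) ≤ ENNReal.ofReal a :=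
    (le_iSup₂ (f := fun (y : ℝ) (_ : 0 < y) => ENNReal.ofReal y * μ {x | y < g x} ^ (1/p))
      t ht).trans h
  have hroot : μ {x | t < g x} ^ (1/p) ≤ ENNReal.ofReal (a / t) := by
    rw [ENNReal.ofReal_div_of_pos ht, ENNReal.le_div_iff_mul_le
      (Or.inl (ENNReal.ofReal_pos.2 ht).ne') (Or.inl ENNReal.ofReal_ne_top), mul_comm]
    exact hlevel
  calc μ {x | t < g x} = (μ {x | t < g x} ^ (1/p)) ^ p := by
        rw [← ENNReal.rpow_mul, one_div_mul_cancel hp.ne', ENNReal.rpow_one]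
    _ ≤ ENNReal.ofReal (a / t) ^ p := by gcongr
    _ = ENNReal.ofReal (a ^ p * t ^ (-p)) := by
        rw [ENNReal.ofReal_rpow_of_nonneg (by positivity) hp.le, Real.div_rpow ha ht.le,
          Real.rpow_neg ht.le, div_eq_mul_inv]

lemma setLIntegral_ofReal_le_of_measure_lt_le {p c t₀ : ℝ} {g : X → ℝ} (E : Set X)
    (hp : 1 < p) (hg : Measurable g) (hg0 : 0 ≤ g) (hc : 0 ≤ c) (ht₀ : 0 < t₀)
    (hdist : ∀ t, 0 < t → μ {x | t < g x} ≤ ENNReal.ofReal (c * t ^ (-p))) :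
    ∫⁻ x in E, ENNReal.ofReal (g x) ∂μ ≤
      μ E * ENNReal.ofReal t₀ + ENNReal.ofReal (c * (t₀ ^ (1 - p) / (p - 1))) := by
  rw [lintegral_eq_lintegral_meas_lt _ (ae_of_all _ hg0) hg.aemeasurable,
    ← Ioc_union_Ioi_eq_Ioi ht₀.le, lintegral_union measurableSet_Ioi (Ioc_disjoint_Ioi le_rfl)]
  gcongr
  · calc ∫⁻ t in Ioc 0 t₀, μ.restrict E {x | t < g x}
        ≤ ∫⁻ _ in Ioc 0 t₀, μ E := setLIntegral_mono measurable_const fun t _ =>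
          (measure_mono (subset_univ _)).trans_eq (Measure.restrict_apply_univ E)
      _ = μ E * ENNReal.ofReal t₀ := by rw [setLIntegral_const, Real.volume_Ioc, sub_zero]
  · calc ∫⁻ t in Ioi t₀, μ.restrict E {x | t < g x}
        ≤ ∫⁻ t in Ioi t₀, ENNReal.ofReal c * ENNReal.ofReal (t ^ (-p)) :=
          setLIntegral_mono (by fun_prop) fun t ht => (Measure.restrict_apply_le _ _).trans
            ((hdist t (ht₀.trans ht)).trans_eq (ENNReal.ofReal_mul hc))
      _ = ENNReal.ofReal (c * (t₀ ^ (1 - p) / (p - 1))) := by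
          rw [lintegral_const_mul _ (by fun_prop), lintegral_Ioi_ofReal_rpow_neg hp ht₀,
            ← ENNReal.ofReal_mul hc]

lemma rpow_neg_mul_setLIntegral_le {p p' a : ℝ} {g : X → ℝ} {E : Set X} (hp : 1 < p)
    (hp' : 1/p + 1/p' = 1) (hg : Measurable g) (hg0 : 0 ≤ g) (hE0 : 0 < μ E) (hE : μ E < ⊤)
    (ha : 0 < a) (hA : weakLpQuasinorm μ p g ≤ ENNReal.ofReal a) :
    μ E ^ (-(1/p')) * ∫⁻ x in E, ENNReal.ofReal (g x) ∂μ ≤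
      ENNReal.ofReal (p / (p - 1)) * ENNReal.ofReal a := by
  set m := (μ E).toReal
  have hm : 0 < m := ENNReal.toReal_pos hE0.ne' hE.ne
  have hμE : μ E = ENNReal.ofReal m := (ENNReal.ofReal_toReal hE.ne).symm
  have hbound := setLIntegral_ofReal_le_of_measure_lt_le E hp hg hg0 (by positivity)
    (by positivity : 0 < a * m ^ (-(1/p)))
    fun t ht => measure_lt_le_of_weakLpQuasinorm_le (by linarith) ha.le ht hA
  rw [hμE, ← ENNReal.ofReal_mul hm.le, ← ENNReal.ofReal_add (by positivity)
    (mul_nonneg (by positivity) (div_nonneg (by positivity) (by linarith))),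
    split_bound_at_optimal_level hp ha hm] at hbound
  have hcancel : m ^ (-(1/p')) * m ^ (1 - 1/p) = 1 := by
    rw [← Real.rpow_add hm, show -(1/p') + (1 - 1/p) = 0 by linarith, Real.rpow_zero]
  calc μ E ^ (-(1/p')) * ∫⁻ x in E, ENNReal.ofReal (g x) ∂μ
      ≤ ENNReal.ofReal (m ^ (-(1/p'))) * ENNReal.ofReal (p / (p - 1) * a * m ^ (1 - 1/p)) := by
        rw [hμE, ENNReal.ofReal_rpow_of_pos hm]
        gcongr
    _ = ENNReal.ofReal (p / (p - 1)) * ENNReal.ofReal a := by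
        rw [← ENNReal.ofReal_mul (by positivity), ← ENNReal.ofReal_mul (by positivity)]
        congr 1
        linear_combination (p / (p - 1) * a) * hcancel

theorem weakLpAverageNorm_le_weakLpQuasinorm {p p' : ℝ} {g : X → ℝ} (hp : 1 < p)
    (hp' : 1/p + 1/p' = 1) (hg : Measurable g) (hg0 : 0 ≤ g) :
    weakLpAverageNorm μ p' g ≤ ENNReal.ofReal (p / (p - 1)) * weakLpQuasinorm μ p g :=
  iSup₂_le fun _ ⟨_, hE0, hE⟩ =>
    ENNReal.le_mul_of_forall_le_ofReal
      (ENNReal.ofReal_pos.2 (div_pos (by linarith) (by linarith))).ne' ENNReal.ofReal_ne_top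
      fun _ ha hA => rpow_neg_mul_setLIntegral_le hp hp' hg hg0 hE0 hE ha hA

lemma ofReal_mul_rpow_le_weakLpAverageNorm {p p' y : ℝ} {g : X → ℝ} {E : Set X} (hp : 0 < p)
    (hp' : 1/p + 1/p' = 1) (hE : MeasurableSet E) (hEg : E ⊆ {x | y < g x})
    (hEfin : μ E < ⊤) :
    ENNReal.ofReal y * μ E ^ (1/p) ≤ weakLpAverageNorm μ p' g := by
  rcases eq_or_ne (μ E) 0 with h0 | h0
  · rw [h0, ENNReal.zero_rpow_of_pos (by positivity), mul_zero]
    exact zero_le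
  have hexp : μ E ^ (1/p) = μ E ^ (-(1/p')) * μ E := by
    rw [show 1/p = -(1/p') + 1 by linarith, ENNReal.rpow_add _ _ h0 hEfin.ne, ENNReal.rpow_one]
  calc ENNReal.ofReal y * μ E ^ (1/p) = μ E ^ (-(1/p')) * (ENNReal.ofReal y * μ E) := by
        rw [hexp]
        ring
    _ ≤ μ E ^ (-(1/p')) * ∫⁻ x in E, ENNReal.ofReal (g x) ∂μ := by
        gcongr
        rw [← setLIntegral_const]
        exact setLIntegral_mono' hE fun x hx => ENNReal.ofReal_le_ofReal (hEg hx).le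
    _ ≤ weakLpAverageNorm μ p' g := le_iSup₂_of_le E ⟨hE, pos_iff_ne_zero.2 h0, hEfin⟩ le_rfl

theorem weakLpQuasinorm_le_weakLpAverageNorm [SigmaFinite μ] {p p' : ℝ} {g : X → ℝ} (hp : 0 < p)
    (hp' : 1/p + 1/p' = 1) (hg : Measurable g) :
    weakLpQuasinorm μ p g ≤ weakLpAverageNorm μ p' g := by
  refine iSup₂_le fun y _ => ?_
  have hS : MeasurableSet {x | y < g x} := measurableSet_lt measurable_const hg
  have hexhaust : ENNReal.ofReal y * μ {x | y < g x} ^ (1/p) =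
      ⨆ n, ENNReal.ofReal y * μ ({x | y < g x} ∩ spanningSets μ n) ^ (1/p) := by
    rw [← Measure.iSup_restrict_spanningSets, ← ENNReal.orderIsoRpow_apply (1/p) (by positivity),
      OrderIso.map_iSup, ENNReal.mul_iSup]
    simp only [ENNReal.orderIsoRpow_apply, Measure.restrict_apply hS]
  rw [hexhaust]
  exact iSup_le fun n => ofReal_mul_rpow_le_weakLpAverageNorm hp hp'
    (hS.inter (measurableSet_spanningSets μ n)) inter_subset_left
    ((measure_mono inter_subset_right).trans_lt (measure_spanningSets_lt_top μ n))

end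

theorem stmt4 {X : Type*} [MeasurableSpace X] (μ : Measure X) [SigmaFinite μ]
    (p p' : ℝ) (hp : 1 < p) (hp' : 1/p + 1/p' = 1) :
    ∃ C : ℝ, 0 < C ∧ ∀ f : X → ℂ, Measurable f →
      (⨆ (E : Set X) (_ : MeasurableSet E ∧ 0 < μ E ∧ μ E < ⊤),
          (μ E) ^ (-(1/p')) * ∫⁻ x in E, ENNReal.ofReal ‖f x‖ ∂μ) ≤
        ENNReal.ofReal C *
          (⨆ (y : ℝ) (_ : 0 < y), ENNReal.ofReal y * (μ {x | y < ‖f x‖}) ^ (1/p)) ∧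
      (⨆ (y : ℝ) (_ : 0 < y), ENNReal.ofReal y * (μ {x | y < ‖f x‖}) ^ (1/p)) ≤
        ⨆ (E : Set X) (_ : MeasurableSet E ∧ 0 < μ E ∧ μ E < ⊤),
          (μ E) ^ (-(1/p')) * ∫⁻ x in E, ENNReal.ofReal ‖f x‖ ∂μ :=
  ⟨p / (p - 1), div_pos (by linarith) (by linarith), fun f hf =>
    ⟨weakLpAverageNorm_le_weakLpQuasinorm (g := fun x => ‖f x‖) hp hp' hf.norm fun x => norm_nonneg _,
      weakLpQuasinorm_le_weakLpAverageNorm (g := fun x => ‖f x‖) (by linarith) hp' hf.norm⟩⟩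
end

section
/- Let n ≥ 2, let α ∈ ℝⁿ have nonnegative entries with α₁ = α₂ = max_j α_j > 0, and for s ∈ (0, 1/4) let F_s = {z ∈ 𝔻ⁿ : |z₁z₂| < s, s < |z₁| < √s}. Then there exist constants c, C > 0 independent of s such that c · s^{2α₁+2} log(1/s) ≤ ∫_{F_s} ∏_j |z_j|^{2α_j} dV(z) ≤ C · s^{2α₁+2} log(1/s) for all sufficiently small s. -/
/-!
Cut the shell `s < |z₀| < √s` into its `≍ log (1/s)` dyadic scales `2ᵏ s < |z₀| < 2ᵏ⁺¹ s`.
At scale `k` the condition `|z₀ z₁| < s` confines `z₁` to radius `≍ 2⁻ᵏ`, so that piece of `F_s`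
contains a product of annuli and is covered by a polydisc, both of volume `≍ s²`; on either one
the weight is `≍ (|z₀| |z₁|)^(2α₀) ≍ s^(2α₀)`, because `α₀ = α₁`. Summing over the scales gives
`s^(2α₀ + 2) log (1/s)`.
-/

open MeasureTheory Metric Set Real

lemma Complex.volume_ball_zero (r : ℝ) (hr : 0 ≤ r) :
    volume (ball (0 : ℂ) r) = ENNReal.ofReal (π * r ^ 2) := by
  rw [Complex.volume_ball, ← ENNReal.ofReal_pow hr, ← NNReal.coe_real_pi,
    ENNReal.ofReal_coe_nnreal.symm, ← ENNReal.ofReal_mul (by positivity), mul_comm]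

lemma Complex.volume_ball_diff_closedBall_half (r : ℝ) (hr : 0 < r) :
    volume (ball (0 : ℂ) r \ closedBall 0 (r / 2)) = ENNReal.ofReal (3 * π / 4 * r ^ 2) := by
  rw [measure_sdiff (closedBall_subset_ball (by linarith))
      measurableSet_closedBall.nullMeasurableSet measure_closedBall_lt_top.ne,
    Complex.volume_closedBall, ← Complex.volume_ball, Complex.volume_ball_zero r hr.le,
    Complex.volume_ball_zero _ (by positivity), ← ENNReal.ofReal_sub _ (by positivity)]
  ring_nf

variable {ι : Type*}

def polydisc (r : ι → ℝ) : Set (ι → ℂ) := univ.pi fun j => ball 0 (r j)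

def dyadicPolyannulus (r : ι → ℝ) : Set (ι → ℂ) :=
  univ.pi fun j => ball 0 (r j) \ closedBall 0 (r j / 2)

def regionF (i₀ i₁ : ι) (s : ℝ) : Set (ι → ℂ) :=
  {z | (∀ j, ‖z j‖ < 1) ∧ ‖z i₀ * z i₁‖ < s ∧ s < ‖z i₀‖ ∧ ‖z i₀‖ < √s}

section polyradius

variable [DecidableEq ι]

def polyradius (i₀ i₁ : ι) (x y : ℝ) : ι → ℝ := Pi.mulSingle i₀ x * Pi.mulSingle i₁ y

lemma polyradius_pos {i₀ i₁ : ι} {x y : ℝ} (hx : 0 < x) (hy : 0 < y) (j : ι) :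
    0 < polyradius i₀ i₁ x y j := by
  simp only [polyradius, Pi.mul_apply, Pi.mulSingle_apply]
  split_ifs <;> positivity

lemma polyradius_apply_left {i₀ i₁ : ι} (h : i₀ ≠ i₁) (x y : ℝ) :
    polyradius i₀ i₁ x y i₀ = x := by
  simp [polyradius, h]

lemma polyradius_apply_right {i₀ i₁ : ι} (h : i₀ ≠ i₁) (x y : ℝ) :
    polyradius i₀ i₁ x y i₁ = y := by
  simp [polyradius, h.symm]

lemma polyradius_apply_of_ne {i₀ i₁ j : ι} (h₀ : j ≠ i₀) (h₁ : j ≠ i₁) (x y : ℝ) :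
    polyradius i₀ i₁ x y j = 1 := by
  simp [polyradius, h₀, h₁]

lemma regionF_subset_iUnion_polydisc {i₀ i₁ : ι} (h : i₀ ≠ i₁) {s : ℝ} (hs : 0 < s) {N : ℕ}
    (hN : √s < 2 ^ (N + 1) * s) :
    regionF i₀ i₁ s ⊆
      ⋃ k ∈ Finset.range (N + 1), polydisc (polyradius i₀ i₁ (2 ^ (k + 1) * s) (2 ^ k)⁻¹) := by
  rintro z ⟨hdisc, hprod, hlow, hhigh⟩
  obtain ⟨k, hk, hk'⟩ := exists_nat_pow_near (le_div_iff₀ hs |>.mpr (by linarith))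
    (one_lt_two : (1 : ℝ) < 2) (x := ‖z i₀‖ / s)
  rw [le_div_iff₀ hs] at hk
  rw [div_lt_iff₀ hs] at hk'
  have hkN : k < N + 1 :=
    (pow_lt_pow_iff_right₀ one_lt_two).mp (lt_of_mul_lt_mul_right (by linarith) hs.le)
  refine mem_biUnion (Finset.mem_coe.mpr (Finset.mem_range.mpr hkN)) fun j _ => ?_
  rw [mem_ball_zero_iff]
  by_cases hj₀ : j = i₀
  · subst hj₀; rwa [polyradius_apply_left h]
  by_cases hj₁ : j = i₁
  · subst hj₁
    rw [polyradius_apply_right h, ← one_div, lt_div_iff₀ (by positivity)]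
    rw [norm_mul] at hprod
    nlinarith [norm_nonneg (z j)]
  rw [polyradius_apply_of_ne hj₀ hj₁]
  exact hdisc j

lemma dyadicPolyannulus_subset_regionF {i₀ i₁ : ι} (h : i₀ ≠ i₁) {s : ℝ} (hs : 0 < s)
    (hs1 : s ≤ 1) {N k : ℕ} (hk : k < N) (hN : 2 ^ N * s ≤ √s) :
    dyadicPolyannulus (polyradius i₀ i₁ (2 ^ (k + 1) * s) (2 ^ (k + 1))⁻¹) ⊆ regionF i₀ i₁ s := by
  intro z hz
  have hz' (j : ι) := hz j trivial
  have hrad : 2 ^ (k + 1) * s ≤ √s :=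
    le_trans (by gcongr; exacts [one_le_two, hk]) hN
  have hsqrt : √s ≤ 1 := sqrt_le_one.mpr hs1
  have hz₀ := hz' i₀
  have hz₁ := hz' i₁
  simp only [polyradius_apply_left h, polyradius_apply_right h, mem_sdiff, mem_ball_zero_iff,
    mem_closedBall_zero_iff, not_le] at hz₀ hz₁
  refine ⟨fun j => ?_, ?_, ?_, by linarith⟩
  · by_cases hj₀ : j = i₀
    · subst hj₀; linarith
    by_cases hj₁ : j = i₁
    · subst hj₁
      exact hz₁.1.trans_le (inv_le_one_of_one_le₀ (one_le_pow₀ one_le_two))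
    simpa [polyradius_apply_of_ne hj₀ hj₁] using (hz' j).1
  · calc ‖z i₀ * z i₁‖ = ‖z i₀‖ * ‖z i₁‖ := norm_mul _ _
      _ < 2 ^ (k + 1) * s * (2 ^ (k + 1))⁻¹ :=
        mul_lt_mul'' hz₀.1 hz₁.1 (norm_nonneg _) (norm_nonneg _)
      _ = s := by field_simp
  · calc s ≤ 2 ^ (k + 1) * s / 2 := by
          rw [pow_succ, mul_comm _ 2, mul_assoc, mul_div_cancel_left₀ _ two_ne_zero]
          exact le_mul_of_one_le_left hs.le (one_le_pow₀ one_le_two)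
      _ < ‖z i₀‖ := hz₀.2

lemma pairwiseDisjoint_dyadicPolyannulus {i₀ i₁ : ι} (h : i₀ ≠ i₁) {s : ℝ} (hs : 0 < s)
    (K : Set ℕ) :
    K.PairwiseDisjoint fun k =>
      dyadicPolyannulus (polyradius i₀ i₁ (2 ^ (k + 1) * s) (2 ^ (k + 1))⁻¹) := by
  refine Pairwise.set_pairwise ((pairwise_disjoint_on _).mpr fun m n hmn => ?_) K
  refine disjoint_left.mpr fun z hm hn => ?_
  have hm₀ := (hm i₀ trivial).1
  have hn₀ := (hn i₀ trivial).2
  simp only [polyradius_apply_left h, mem_ball_zero_iff, mem_closedBall_zero_iff,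
    not_le] at hm₀ hn₀
  have : (2 : ℝ) ^ (m + 1) ≤ 2 ^ (n + 1) / 2 := by
    rw [pow_succ _ n, mul_div_cancel_right₀ _ two_ne_zero]
    exact pow_le_pow_right₀ one_le_two hmn
  nlinarith

end polyradius

section Fintype

variable [Fintype ι]

lemma measurableSet_dyadicPolyannulus (r : ι → ℝ) : MeasurableSet (dyadicPolyannulus r) :=
  MeasurableSet.univ_pi fun _ => measurableSet_ball.diff measurableSet_closedBall

lemma volume_polydisc (r : ι → ℝ) (hr : ∀ j, 0 ≤ r j) :
    volume (polydisc r) = ENNReal.ofReal (π ^ Fintype.card ι * (∏ j, r j) ^ 2) := by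
  simp_rw [polydisc, volume_pi_pi, fun j => Complex.volume_ball_zero (r j) (hr j)]
  rw [← ENNReal.ofReal_prod_of_nonneg (fun j _ => by positivity), Finset.prod_mul_distrib,
    Finset.prod_const, Finset.prod_pow, Finset.card_univ]

lemma volume_dyadicPolyannulus (r : ι → ℝ) (hr : ∀ j, 0 < r j) :
    volume (dyadicPolyannulus r) =
      ENNReal.ofReal ((3 * π / 4) ^ Fintype.card ι * (∏ j, r j) ^ 2) := by
  simp_rw [dyadicPolyannulus, volume_pi_pi,
    fun j => Complex.volume_ball_diff_closedBall_half (r j) (hr j)]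
  rw [← ENNReal.ofReal_prod_of_nonneg (fun j _ => by positivity), Finset.prod_mul_distrib,
    Finset.prod_const, Finset.prod_pow, Finset.card_univ]

lemma prod_norm_rpow_le_of_mem_polydisc {r e : ι → ℝ} (he : ∀ j, 0 ≤ e j) {z : ι → ℂ}
    (hz : z ∈ polydisc r) : ∏ j, ‖z j‖ ^ e j ≤ ∏ j, r j ^ e j :=
  Finset.prod_le_prod (fun j _ => by positivity) fun j _ =>
    rpow_le_rpow (norm_nonneg _) (mem_ball_zero_iff.mp (hz j trivial)).le (he j)

lemma prod_half_rpow_le_of_mem_dyadicPolyannulus {r e : ι → ℝ} (hr : ∀ j, 0 ≤ r j)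
    (he : ∀ j, 0 ≤ e j) {z : ι → ℂ} (hz : z ∈ dyadicPolyannulus r) :
    ∏ j, (r j / 2) ^ e j ≤ ∏ j, ‖z j‖ ^ e j :=
  Finset.prod_le_prod (fun j _ => by have := hr j; positivity) fun j _ =>
    rpow_le_rpow (by have := hr j; positivity) (le_of_lt (by simpa using (hz j trivial).2)) (he j)

variable [DecidableEq ι]

lemma prod_polyradius (i₀ i₁ : ι) (x y : ℝ) : ∏ j, polyradius i₀ i₁ x y j = x * y := by
  simp [polyradius, Finset.prod_mul_distrib]

lemma prod_polyradius_rpow {i₀ i₁ : ι} {x y : ℝ} (hx : 0 < x) (hy : 0 < y) (e : ι → ℝ) :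
    ∏ j, polyradius i₀ i₁ x y j ^ e j = x ^ e i₀ * y ^ e i₁ := by
  have single_rpow (i : ι) (t : ℝ) : ∏ j, Pi.mulSingle i t j ^ e j = t ^ e i := by
    simp_rw [Pi.apply_mulSingle (fun j t => t ^ e j) (fun j => one_rpow (e j)),
      Fintype.prod_pi_mulSingle']
  rw [← single_rpow i₀ x, ← single_rpow i₁ y, ← Finset.prod_mul_distrib]
  refine Finset.prod_congr rfl fun j _ => mul_rpow ?_ ?_ <;>
    simp only [Pi.mulSingle_apply] <;> split_ifs <;> positivity

variable {i₀ i₁ : ι} {α : ι → ℝ} {s : ℝ} {N : ℕ}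

lemma volume_regionF_le (h : i₀ ≠ i₁) (hs : 0 < s) (hN : √s < 2 ^ (N + 1) * s) :
    volume (regionF i₀ i₁ s) ≤ ENNReal.ofReal ((N + 1) * (π ^ Fintype.card ι * (2 * s) ^ 2)) :=
  calc volume (regionF i₀ i₁ s)
      ≤ ∑ k ∈ Finset.range (N + 1),
          volume (polydisc (polyradius i₀ i₁ (2 ^ (k + 1) * s) (2 ^ k)⁻¹)) :=
        (measure_mono (regionF_subset_iUnion_polydisc h hs hN)).trans
          (measure_biUnion_finset_le _ _)
    _ = ∑ k ∈ Finset.range (N + 1), ENNReal.ofReal (π ^ Fintype.card ι * (2 * s) ^ 2) := by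
        refine Finset.sum_congr rfl fun k _ => ?_
        rw [volume_polydisc _ fun j => (polyradius_pos (by positivity)
          (by positivity) j).le, prod_polyradius]
        congr 3
        field_simp
        ring
    _ = _ := by
        rw [Finset.sum_const, Finset.card_range, nsmul_eq_mul, ← ENNReal.ofReal_natCast,
          ← ENNReal.ofReal_mul (by positivity)]
        push_cast
        rfl

lemma lintegral_regionF_le (h : i₀ ≠ i₁) (hα : ∀ j, 0 ≤ α j) (h01 : α i₀ = α i₁) (hs : 0 < s)
    (hN : √s < 2 ^ (N + 1) * s) :
    ∫⁻ z in regionF i₀ i₁ s, ENNReal.ofReal (∏ j, ‖z j‖ ^ (2 * α j)) ≤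
      ENNReal.ofReal ((N + 1) * π ^ Fintype.card ι * (2 * s) ^ (2 * α i₀ + 2)) := by
  have hcover := regionF_subset_iUnion_polydisc h hs hN
  have hweight : ∀ z ∈ regionF i₀ i₁ s,
      ENNReal.ofReal (∏ j, ‖z j‖ ^ (2 * α j)) ≤ ENNReal.ofReal ((2 * s) ^ (2 * α i₀)) := by
    intro z hz
    obtain ⟨k, -, hk⟩ := mem_iUnion₂.mp (hcover hz)
    refine ENNReal.ofReal_le_ofReal ((prod_norm_rpow_le_of_mem_polydisc
      (fun j => by linarith [hα j]) hk).trans_eq ?_)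
    rw [prod_polyradius_rpow (by positivity) (by positivity), ← h01,
      ← mul_rpow (by positivity) (by positivity)]
    congr 1
    field_simp
    ring
  calc ∫⁻ z in regionF i₀ i₁ s, ENNReal.ofReal (∏ j, ‖z j‖ ^ (2 * α j))
      ≤ ∫⁻ _ in regionF i₀ i₁ s, ENNReal.ofReal ((2 * s) ^ (2 * α i₀)) :=
        setLIntegral_mono measurable_const hweight
    _ ≤ ENNReal.ofReal ((2 * s) ^ (2 * α i₀)) *
          ENNReal.ofReal ((N + 1) * (π ^ Fintype.card ι * (2 * s) ^ 2)) := by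
        rw [setLIntegral_const]
        gcongr
        exact volume_regionF_le h hs hN
    _ = _ := by
        rw [← ENNReal.ofReal_mul (by positivity), rpow_add (by positivity), rpow_two]
        ring_nf

lemma volume_biUnion_dyadicPolyannulus (h : i₀ ≠ i₁) (hs : 0 < s) :
    volume (⋃ k ∈ Finset.range N,
        dyadicPolyannulus (polyradius i₀ i₁ (2 ^ (k + 1) * s) (2 ^ (k + 1))⁻¹)) =
      ENNReal.ofReal (N * ((3 * π / 4) ^ Fintype.card ι * s ^ 2)) := by
  rw [measure_biUnion_finset (pairwiseDisjoint_dyadicPolyannulus h hs _)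
      fun k _ => measurableSet_dyadicPolyannulus _,
    Finset.sum_congr rfl fun k _ => by
      rw [volume_dyadicPolyannulus _ (polyradius_pos (by positivity) (by positivity)),
        prod_polyradius, mul_right_comm, mul_inv_cancel₀ (by positivity), one_mul],
    Finset.sum_const, Finset.card_range, nsmul_eq_mul, ← ENNReal.ofReal_natCast,
    ← ENNReal.ofReal_mul (by positivity)]

lemma le_lintegral_regionF (h : i₀ ≠ i₁) (hα : ∀ j, 0 ≤ α j) (h01 : α i₀ = α i₁) (hs : 0 < s)
    (hs1 : s ≤ 1) (hN : 2 ^ N * s ≤ √s) :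
    ENNReal.ofReal (N * (3 * π / 4) ^ Fintype.card ι * s ^ (2 * α i₀ + 2) /
        ∏ j, (2 : ℝ) ^ (2 * α j)) ≤
      ∫⁻ z in regionF i₀ i₁ s, ENNReal.ofReal (∏ j, ‖z j‖ ^ (2 * α j)) := by
  set B : ℕ → Set (ι → ℂ) := fun k =>
    dyadicPolyannulus (polyradius i₀ i₁ (2 ^ (k + 1) * s) (2 ^ (k + 1))⁻¹)
  have hweight : ∀ z ∈ ⋃ k ∈ Finset.range N, B k,
      ENNReal.ofReal (s ^ (2 * α i₀) / ∏ j, (2 : ℝ) ^ (2 * α j)) ≤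
        ENNReal.ofReal (∏ j, ‖z j‖ ^ (2 * α j)) := by
    intro z hz
    obtain ⟨k, -, hk⟩ := mem_iUnion₂.mp hz
    refine ENNReal.ofReal_le_ofReal (le_of_eq_of_le ?_ (prod_half_rpow_le_of_mem_dyadicPolyannulus
      (fun j => (polyradius_pos (by positivity) (by positivity) j).le)
      (fun j => by linarith [hα j]) hk))
    rw [Finset.prod_congr rfl fun j _ =>
        div_rpow (polyradius_pos (by positivity) (by positivity) j).le zero_le_two _,
      Finset.prod_div_distrib, prod_polyradius_rpow (by positivity) (by positivity), ← h01,
      ← mul_rpow (by positivity) (by positivity)]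
    congr 2
    field_simp
  calc ENNReal.ofReal (N * (3 * π / 4) ^ Fintype.card ι * s ^ (2 * α i₀ + 2) /
        ∏ j, (2 : ℝ) ^ (2 * α j))
      = ENNReal.ofReal (s ^ (2 * α i₀) / ∏ j, (2 : ℝ) ^ (2 * α j)) *
          volume (⋃ k ∈ Finset.range N, B k) := by
        rw [volume_biUnion_dyadicPolyannulus h hs, ← ENNReal.ofReal_mul (by positivity),
          rpow_add hs, rpow_two]
        ring_nf
    _ = ∫⁻ _ in ⋃ k ∈ Finset.range N, B k,
          ENNReal.ofReal (s ^ (2 * α i₀) / ∏ j, (2 : ℝ) ^ (2 * α j)) :=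
        (setLIntegral_const _ _).symm
    _ ≤ ∫⁻ z in ⋃ k ∈ Finset.range N, B k, ENNReal.ofReal (∏ j, ‖z j‖ ^ (2 * α j)) :=
        setLIntegral_mono' (Finset.measurableSet_biUnion _ fun k _ =>
          measurableSet_dyadicPolyannulus _) hweight
    _ ≤ _ := lintegral_mono_set (iUnion₂_subset fun k hk =>
        dyadicPolyannulus_subset_regionF h hs hs1 (Finset.mem_range.mp hk) hN)

end Fintype

lemma exists_dyadic_scale_count {s : ℝ} (hs : 0 < s) (hs4 : s < 1 / 4) :
    ∃ N : ℕ, 2 ^ N * s ≤ √s ∧ √s < 2 ^ (N + 1) * s ∧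
      log (1 / s) ≤ 4 * log 2 * N ∧ (N + 1) * log 2 ≤ log (1 / s) := by
  have hsqrt : 0 < √s := sqrt_pos.mpr hs
  have hs_eq : √s * √s = s := mul_self_sqrt hs.le
  have htwo : 2 < 1 / √s := by
    rw [lt_div_iff₀ hsqrt, ← lt_div_iff₀' two_pos, sqrt_lt' (by norm_num)]
    linarith
  obtain ⟨N, hN, hN'⟩ := exists_nat_pow_near (x := 1 / √s) (by linarith) one_lt_two
  have hlog : log (1 / √s) = log (1 / s) / 2 := by
    rw [one_div, one_div, log_inv, log_inv, log_sqrt hs.le]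
    ring
  have hlog_lo : N * log 2 ≤ log (1 / s) / 2 := by
    rw [← hlog, ← log_pow]
    exact log_le_log (by positivity) hN
  have hlog_hi : log (1 / s) / 2 < (N + 1) * log 2 := by
    rw [← hlog, ← Nat.cast_add_one, ← log_pow]
    exact log_lt_log (by positivity) hN'
  have hlog_two : log 2 < log (1 / s) / 2 := hlog ▸ log_lt_log two_pos htwo
  have hN1 : 1 ≤ N := by
    have : (2 : ℝ) ^ 1 < 2 ^ (N + 1) := by linarith [pow_one (2 : ℝ)]
    have := (pow_lt_pow_iff_right₀ one_lt_two).mp this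
    omega
  have hN1' : (1 : ℝ) ≤ N := by exact_mod_cast hN1
  rw [le_div_iff₀ hsqrt] at hN
  rw [div_lt_iff₀ hsqrt] at hN'
  refine ⟨N, by nlinarith, by nlinarith, by nlinarith [log_pos one_lt_two], by linarith⟩

theorem exists_bounds_lintegral_regionF [Fintype ι] [DecidableEq ι] {i₀ i₁ : ι} (h : i₀ ≠ i₁)
    {α : ι → ℝ} (hα : ∀ j, 0 ≤ α j) (h01 : α i₀ = α i₁) :
    ∃ c C : ℝ, 0 < c ∧ 0 < C ∧ ∀ s : ℝ, 0 < s → s < 1 / 4 →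
      ENNReal.ofReal (c * s ^ (2 * α i₀ + 2) * log (1 / s)) ≤
          ∫⁻ z in regionF i₀ i₁ s, ENNReal.ofReal (∏ j, ‖z j‖ ^ (2 * α j)) ∧
        ∫⁻ z in regionF i₀ i₁ s, ENNReal.ofReal (∏ j, ‖z j‖ ^ (2 * α j)) ≤
          ENNReal.ofReal (C * s ^ (2 * α i₀ + 2) * log (1 / s)) := by
  have hlog2 := log_pos one_lt_two
  refine ⟨(3 * π / 4) ^ Fintype.card ι / (4 * log 2 * ∏ j, (2 : ℝ) ^ (2 * α j)),
    π ^ Fintype.card ι * 2 ^ (2 * α i₀ + 2) / log 2, by positivity, by positivity,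
    fun s hs hs4 => ?_⟩
  obtain ⟨N, hlow, hhigh, hL, hL'⟩ := exists_dyadic_scale_count hs hs4
  refine ⟨(ENNReal.ofReal_le_ofReal ?_).trans
      (le_lintegral_regionF h hα h01 hs (by linarith) hlow),
    (lintegral_regionF_le h hα h01 hs hhigh).trans (ENNReal.ofReal_le_ofReal ?_)⟩
  · have hP : 0 < ∏ j, (2 : ℝ) ^ (2 * α j) := by positivity
    have hK : 0 < (3 * π / 4) ^ Fintype.card ι * s ^ (2 * α i₀ + 2) := by positivity
    rw [div_mul_eq_mul_div, div_mul_eq_mul_div, div_le_div_iff₀ (by positivity) hP]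
    nlinarith [mul_le_mul_of_nonneg_left hL (mul_pos hK hP).le]
  · rw [mul_rpow zero_le_two hs.le, div_mul_eq_mul_div, div_mul_eq_mul_div, le_div_iff₀ hlog2]
    have hK : 0 < π ^ Fintype.card ι * 2 ^ (2 * α i₀ + 2) * s ^ (2 * α i₀ + 2) := by positivity
    nlinarith [mul_le_mul_of_nonneg_left hL' hK.le]

theorem stmt19 (n : ℕ) (hn : 2 ≤ n) (α : Fin n → ℝ) (hα : ∀ j, 0 ≤ α j)
    (h01 : α ⟨0, by omega⟩ = α ⟨1, by omega⟩) :
    ∃ c C s₀ : ℝ, 0 < c ∧ 0 < C ∧ 0 < s₀ ∧ s₀ < 1/4 ∧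
      ∀ s : ℝ, 0 < s → s < s₀ →
        ENNReal.ofReal (c * s ^ (2 * α ⟨0, by omega⟩ + 2) * Real.log (1/s)) ≤
          (∫⁻ z in {z : Fin n → ℂ | (∀ j, ‖z j‖ < 1) ∧
              ‖z ⟨0, by omega⟩ * z ⟨1, by omega⟩‖ < s ∧
              s < ‖z ⟨0, by omega⟩‖ ∧
              ‖z ⟨0, by omega⟩‖ < Real.sqrt s},
            ENNReal.ofReal (∏ j, ‖z j‖ ^ (2 * α j))) ∧
        (∫⁻ z in {z : Fin n → ℂ | (∀ j, ‖z j‖ < 1) ∧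
              ‖z ⟨0, by omega⟩ * z ⟨1, by omega⟩‖ < s ∧
              s < ‖z ⟨0, by omega⟩‖ ∧
              ‖z ⟨0, by omega⟩‖ < Real.sqrt s},
            ENNReal.ofReal (∏ j, ‖z j‖ ^ (2 * α j))) ≤
          ENNReal.ofReal (C * s ^ (2 * α ⟨0, by omega⟩ + 2) * Real.log (1/s)) := by
  obtain ⟨c, C, hc, hC, hbounds⟩ :=
    exists_bounds_lintegral_regionF (ι := Fin n) (i₀ := ⟨0, by omega⟩) (i₁ := ⟨1, by omega⟩)
      (by simp [Fin.ext_iff]) hα h01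
  exact ⟨c, C, 1 / 8, hc, hC, by norm_num, by norm_num,
    fun s hs hs₀ => hbounds s hs (by linarith)⟩
end
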